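/- arXiv:1710.10042 — 2 statements merged into one kernel-verified Lean document; each statement's English description precedes it below -/
import Mathlib

section
/- In the ideal transitivity network with complete diagonal blocks, the number of 3-element subsets of V inducing triad type 300 equals C(n₀,3)+C(n₁,3)+C(n₂,3); the number inducing 030T equals n₀·n₁·n₂; the number inducing 120U equals C(n₀,2)·(n₁+n₂) + C(n₁,2)·n₂; the number inducing 120D equals n₀·(C(n₁,2)+C(n₂,2)) + n₁·C(n₂,2); and no 3-element subset induces any other triad type. -/
variable {V : Type*}

/-- Dyad `{i, j}` is mutual: both arcs present. -/
def Mutual (A : V → V → Prop) (i j : V) : Prop := A i j ∧ A j i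

/-- Dyad `{i, j}` is null: no arc present. -/
def NullDyad (A : V → V → Prop) (i j : V) : Prop := ¬ A i j ∧ ¬ A j i

/-- Dyad `{i, j}` is asymmetric: exactly one of the two arcs is present. -/
def AsymDyad (A : V → V → Prop) (i j : V) : Prop :=
  (A i j ∧ ¬ A j i) ∨ (¬ A i j ∧ A j i)

/-- Triad type 003: all three dyads null. -/
def Triad003 (A : V → V → Prop) (i j k : V) : Prop :=
  NullDyad A i j ∧ NullDyad A j k ∧ NullDyad A i k

/-- Triad type 300: all three dyads mutual. -/
def Triad300 (A : V → V → Prop) (i j k : V) : Prop :=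
  Mutual A i j ∧ Mutual A j k ∧ Mutual A i k

/-- Triad type 102: one mutual dyad, both remaining dyads null. -/
def Triad102 (A : V → V → Prop) (i j k : V) : Prop :=
  (Mutual A i j ∧ NullDyad A j k ∧ NullDyad A i k) ∨
  (Mutual A j k ∧ NullDyad A i j ∧ NullDyad A i k) ∨
  (Mutual A i k ∧ NullDyad A i j ∧ NullDyad A j k)

/-- Triad type 201: two mutual dyads, the remaining dyad null. -/
def Triad201 (A : V → V → Prop) (i j k : V) : Prop :=
  (Mutual A i j ∧ Mutual A j k ∧ NullDyad A i k) ∨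
  (Mutual A i j ∧ Mutual A i k ∧ NullDyad A j k) ∨
  (Mutual A j k ∧ Mutual A i k ∧ NullDyad A i j)

/-- Triad type 012: exactly one asymmetric dyad, both remaining dyads null. -/
def Triad012 (A : V → V → Prop) (i j k : V) : Prop :=
  (AsymDyad A i j ∧ NullDyad A j k ∧ NullDyad A i k) ∨
  (AsymDyad A j k ∧ NullDyad A i j ∧ NullDyad A i k) ∨
  (AsymDyad A i k ∧ NullDyad A i j ∧ NullDyad A j k)

/-- Two asymmetric arcs `x → z` and `y → z` with common head `z`, dyad `{x, y}` null. -/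
def Head021U (A : V → V → Prop) (x y z : V) : Prop :=
  A x z ∧ A y z ∧ ¬ A z x ∧ ¬ A z y ∧ NullDyad A x y

/-- Triad type 021U: two asymmetric arcs with a common head, remaining dyad null. -/
def Triad021U (A : V → V → Prop) (i j k : V) : Prop :=
  Head021U A i j k ∨ Head021U A i k j ∨ Head021U A j k i

/-- Two asymmetric arcs `z → x` and `z → y` with common tail `z`, dyad `{x, y}` null. -/
def Tail021D (A : V → V → Prop) (x y z : V) : Prop :=
  A z x ∧ A z y ∧ ¬ A x z ∧ ¬ A y z ∧ NullDyad A x y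

/-- Triad type 021D: two asymmetric arcs with a common tail, remaining dyad null. -/
def Triad021D (A : V → V → Prop) (i j k : V) : Prop :=
  Tail021D A i j k ∨ Tail021D A i k j ∨ Tail021D A j k i

/-- A directed path `x → y → z` with all other arcs among the three vertices absent. -/
def Path021C (A : V → V → Prop) (x y z : V) : Prop :=
  A x y ∧ A y z ∧ ¬ A y x ∧ ¬ A z y ∧ NullDyad A x z

/-- Triad type 021C. -/
def Triad021C (A : V → V → Prop) (i j k : V) : Prop :=
  Path021C A i j k ∨ Path021C A i k j ∨ Path021C A j i k ∨
  Path021C A j k i ∨ Path021C A k i j ∨ Path021C A k j i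

/-- Mutual dyad `{x, y}` plus asymmetric arcs from each of `x`, `y` to the third vertex `z`. -/
def Up120 (A : V → V → Prop) (x y z : V) : Prop :=
  Mutual A x y ∧ A x z ∧ A y z ∧ ¬ A z x ∧ ¬ A z y

/-- Triad type 120U. -/
def Triad120U (A : V → V → Prop) (i j k : V) : Prop :=
  Up120 A i j k ∨ Up120 A i k j ∨ Up120 A j k i

/-- Mutual dyad `{x, y}` plus asymmetric arcs from the third vertex `z` to each of `x`, `y`. -/
def Down120 (A : V → V → Prop) (x y z : V) : Prop :=
  Mutual A x y ∧ A z x ∧ A z y ∧ ¬ A x z ∧ ¬ A y z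

/-- Triad type 120D. -/
def Triad120D (A : V → V → Prop) (i j k : V) : Prop :=
  Down120 A i j k ∨ Down120 A i k j ∨ Down120 A j k i

/-- Transitive triple: arcs `x → y`, `y → z`, `x → z`, with no reverse arcs. -/
def Trans030 (A : V → V → Prop) (x y z : V) : Prop :=
  A x y ∧ A y z ∧ A x z ∧ ¬ A y x ∧ ¬ A z y ∧ ¬ A z x

/-- Triad type 030T. -/
def Triad030T (A : V → V → Prop) (i j k : V) : Prop :=
  Trans030 A i j k ∨ Trans030 A i k j ∨ Trans030 A j i k ∨
  Trans030 A j k i ∨ Trans030 A k i j ∨ Trans030 A k j i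

/-- Cyclic triple: arcs `x → y`, `y → z`, `z → x`, with no reverse arcs. -/
def Cycle030 (A : V → V → Prop) (x y z : V) : Prop :=
  A x y ∧ A y z ∧ A z x ∧ ¬ A y x ∧ ¬ A z y ∧ ¬ A x z

/-- Triad type 030C. -/
def Triad030C (A : V → V → Prop) (i j k : V) : Prop :=
  Cycle030 A i j k ∨ Cycle030 A i k j

/-- The 3-element subset `s` induces the triad type `T`. -/
def InducesTriad [DecidableEq V] (T : V → V → V → Prop) (s : Finset V) : Prop :=
  ∃ i j k : V, i ≠ j ∧ i ≠ k ∧ j ≠ k ∧ s = {i, j, k} ∧ T i j k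

/-- The ideal transitivity network with complete blocks on the diagonal:
an arc from `i` to `j` iff `i ≠ j` and the level of `i` is at most the level of `j`. -/
def TransDiagAdj (c : V → Fin 3) (i j : V) : Prop :=
  i ≠ j ∧ (c i : ℕ) ≤ (c j : ℕ)


section TriadCensusAux

variable (c : V → Fin 3)

lemma aux_mutual {i j : V} (hij : i ≠ j) (h : (c i : ℕ) = c j) :
    Mutual (TransDiagAdj c) i j :=
  ⟨⟨hij, by omega⟩, ⟨hij.symm, by omega⟩⟩

lemma aux_mutual_val {i j : V} (h : Mutual (TransDiagAdj c) i j) : (c i : ℕ) = c j :=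
  le_antisymm h.1.2 h.2.2

lemma aux_t300 {i j k : V} (hij : i ≠ j) (hik : i ≠ k) (hjk : j ≠ k)
    (e1 : (c i : ℕ) = c j) (e2 : (c j : ℕ) = c k) : Triad300 (TransDiagAdj c) i j k :=
  ⟨aux_mutual c hij e1, aux_mutual c hjk e2, aux_mutual c hik (e1.trans e2)⟩

lemma aux_t030 {i j k : V} (h1 : (c i : ℕ) < c j) (h2 : (c j : ℕ) < c k) :
    Trans030 (TransDiagAdj c) i j k := by
  have hij : i ≠ j := fun h => by subst h; omega
  have hjk : j ≠ k := fun h => by subst h; omega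
  have hik : i ≠ k := fun h => by subst h; omega
  exact ⟨⟨hij, by omega⟩, ⟨hjk, by omega⟩, ⟨hik, by omega⟩,
    fun h => by have := h.2; omega, fun h => by have := h.2; omega,
    fun h => by have := h.2; omega⟩

lemma aux_t120u {i j k : V} (hij : i ≠ j) (e : (c i : ℕ) = c j) (h : (c i : ℕ) < c k) :
    Up120 (TransDiagAdj c) i j k := by
  have hik : i ≠ k := fun h' => by subst h'; omega
  have hjk : j ≠ k := fun h' => by subst h'; omega
  exact ⟨aux_mutual c hij e, ⟨hik, by omega⟩, ⟨hjk, by omega⟩,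
    fun h' => by have := h'.2; omega, fun h' => by have := h'.2; omega⟩

lemma aux_t120d {i j k : V} (hij : i ≠ j) (e : (c i : ℕ) = c j) (h : (c k : ℕ) < c i) :
    Down120 (TransDiagAdj c) i j k := by
  have hki : k ≠ i := fun h' => by subst h'; omega
  have hkj : k ≠ j := fun h' => by subst h'; omega
  exact ⟨aux_mutual c hij e, ⟨hki, by omega⟩, ⟨hkj, by omega⟩,
    fun h' => by have := h'.2; omega, fun h' => by have := h'.2; omega⟩

lemma aux_trans030_val {x y z : V} (h : Trans030 (TransDiagAdj c) x y z) :
    (c x : ℕ) < c y ∧ (c y : ℕ) < c z := by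
  obtain ⟨⟨hxy, h1⟩, ⟨hyz, h2⟩, -, n1, n2, -⟩ := h
  constructor
  · by_contra hc; exact n1 ⟨hxy.symm, by omega⟩
  · by_contra hc; exact n2 ⟨hyz.symm, by omega⟩

lemma aux_up120_val {x y z : V} (h : Up120 (TransDiagAdj c) x y z) :
    x ≠ y ∧ (c x : ℕ) = c y ∧ (c x : ℕ) < c z := by
  obtain ⟨hm, ⟨hxz, h1⟩, -, n1, -⟩ := h
  refine ⟨hm.1.1, aux_mutual_val c hm, ?_⟩
  by_contra hc; exact n1 ⟨hxz.symm, by omega⟩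

lemma aux_down120_val {x y z : V} (h : Down120 (TransDiagAdj c) x y z) :
    x ≠ y ∧ (c x : ℕ) = c y ∧ (c z : ℕ) < c x := by
  obtain ⟨hm, ⟨hzx, h1⟩, -, n1, -⟩ := h
  refine ⟨hm.1.1, aux_mutual_val c hm, ?_⟩
  by_contra hc; exact n1 ⟨hzx.symm, by omega⟩

variable [DecidableEq V]

lemma perm030T {A : V → V → Prop} {i j k : V} (h : Triad030T A i j k) :
    ∃ x y z, ({i, j, k} : Finset V) = {x, y, z} ∧ Trans030 A x y z := by
  rcases h with h|h|h|h|h|h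
  exacts [⟨i, j, k, rfl, h⟩, ⟨i, k, j, by ext t; simp; tauto, h⟩,
    ⟨j, i, k, by ext t; simp; tauto, h⟩, ⟨j, k, i, by ext t; simp; tauto, h⟩,
    ⟨k, i, j, by ext t; simp; tauto, h⟩, ⟨k, j, i, by ext t; simp; tauto, h⟩]

lemma perm120U {A : V → V → Prop} {i j k : V} (h : Triad120U A i j k) :
    ∃ x y z, ({i, j, k} : Finset V) = {x, y, z} ∧ Up120 A x y z := by
  rcases h with h|h|h
  exacts [⟨i, j, k, rfl, h⟩, ⟨i, k, j, by ext t; simp; tauto, h⟩,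
    ⟨j, k, i, by ext t; simp; tauto, h⟩]

lemma perm120D {A : V → V → Prop} {i j k : V} (h : Triad120D A i j k) :
    ∃ x y z, ({i, j, k} : Finset V) = {x, y, z} ∧ Down120 A x y z := by
  rcases h with h|h|h
  exacts [⟨i, j, k, rfl, h⟩, ⟨i, k, j, by ext t; simp; tauto, h⟩,
    ⟨j, k, i, by ext t; simp; tauto, h⟩]

end TriadCensusAux

/-- The set of vertices at level `t`. -/
def Lv [Fintype V] (c : V → Fin 3) (t : Fin 3) : Finset V :=
  Finset.univ.filter fun v => c v = t

section TriadCensusMain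

variable [Fintype V] [DecidableEq V] (c : V → Fin 3)

lemma mem_Lv {c : V → Fin 3} {t : Fin 3} {v : V} : v ∈ Lv c t ↔ c v = t := by
  simp [Lv]

lemma lv_disjoint {t t' : Fin 3} (h : t ≠ t') : Disjoint (Lv c t) (Lv c t') :=
  Finset.disjoint_left.2 fun v hv hv' => h ((mem_Lv.1 hv).symm.trans (mem_Lv.1 hv'))

lemma pows_disjoint {t t' : Fin 3} (h : t ≠ t') {n : ℕ} (hn : n ≠ 0) :
    Disjoint ((Lv c t).powersetCard n) ((Lv c t').powersetCard n) := by
  rw [Finset.disjoint_left]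
  intro s h1 h2
  rw [Finset.mem_powersetCard] at h1 h2
  have hpos : 0 < s.card := by omega
  obtain ⟨v, hv⟩ := Finset.card_pos.1 hpos
  exact (Finset.disjoint_left.1 (lv_disjoint c h)) (h1.1 hv) (h2.1 hv)

lemma census300 :
    {s : Finset V | InducesTriad (Triad300 (TransDiagAdj c)) s} =
      ↑(((Lv c 0).powersetCard 3 ∪ (Lv c 1).powersetCard 3) ∪ (Lv c 2).powersetCard 3) := by
  ext s
  simp only [Set.mem_setOf_eq, Finset.coe_union, Set.mem_union, Finset.mem_coe,
    Finset.mem_powersetCard]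
  constructor
  · rintro ⟨i, j, k, hij, hik, hjk, rfl, hm1, hm2, hm3⟩
    have e1 := aux_mutual_val c hm1
    have e2 := aux_mutual_val c hm2
    have hcard : ({i, j, k} : Finset V).card = 3 :=
      Finset.card_eq_three.2 ⟨i, j, k, hij, hik, hjk, rfl⟩
    have hsub : ∀ t : Fin 3, c i = t → ({i, j, k} : Finset V) ⊆ Lv c t := by
      intro t ht v hv
      rw [mem_Lv]
      simp only [Finset.mem_insert, Finset.mem_singleton] at hv
      rcases hv with rfl|rfl|rfl <;> omega
    have h3 : c i = 0 ∨ c i = 1 ∨ c i = 2 := by omega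
    rcases h3 with h|h|h
    · exact Or.inl (Or.inl ⟨hsub 0 h, hcard⟩)
    · exact Or.inl (Or.inr ⟨hsub 1 h, hcard⟩)
    · exact Or.inr ⟨hsub 2 h, hcard⟩
  · have key : ∀ t : Fin 3, s ⊆ Lv c t → s.card = 3 →
        InducesTriad (Triad300 (TransDiagAdj c)) s := by
      intro t hsub hcard
      obtain ⟨a, b, d, hab, had, hbd, rfl⟩ := Finset.card_eq_three.1 hcard
      have ha : c a = t := mem_Lv.1 (hsub (by simp))
      have hb : c b = t := mem_Lv.1 (hsub (by simp))
      have hd : c d = t := mem_Lv.1 (hsub (by simp))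
      exact ⟨a, b, d, hab, had, hbd, rfl, aux_t300 c hab had hbd (by omega) (by omega)⟩
    rintro ((⟨h1, h2⟩ | ⟨h1, h2⟩) | ⟨h1, h2⟩)
    exacts [key 0 h1 h2, key 1 h1 h2, key 2 h1 h2]

lemma census030 :
    {s : Finset V | InducesTriad (Triad030T (TransDiagAdj c)) s} =
      ↑((Lv c 0 ×ˢ Lv c 1 ×ˢ Lv c 2).image fun p => ({p.1, p.2.1, p.2.2} : Finset V)) := by
  ext s
  simp only [Set.mem_setOf_eq, Finset.coe_image, Set.mem_image, Finset.mem_coe,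
    Finset.mem_product, mem_Lv]
  constructor
  · rintro ⟨i, j, k, hij, hik, hjk, rfl, ht⟩
    obtain ⟨x, y, z, hset, h⟩ := perm030T ht
    obtain ⟨l1, l2⟩ := aux_trans030_val c h
    exact ⟨(x, y, z), ⟨show c x = 0 by omega, show c y = 1 by omega,
      show c z = 2 by omega⟩, hset.symm⟩
  · rintro ⟨⟨x, y, z⟩, ⟨h0, h1, h2⟩, rfl⟩
    dsimp only at h0 h1 h2
    have l1 : (c x : ℕ) < c y := by omega
    have l2 : (c y : ℕ) < c z := by omega
    refine ⟨x, y, z, ?_, ?_, ?_, rfl, Or.inl (aux_t030 c l1 l2)⟩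
    · exact fun h => by subst h; omega
    · exact fun h => by subst h; omega
    · exact fun h => by subst h; omega

lemma count030 :
    ((Lv c 0 ×ˢ Lv c 1 ×ˢ Lv c 2).image fun p => ({p.1, p.2.1, p.2.2} : Finset V)).card
      = (Lv c 0).card * ((Lv c 1).card * (Lv c 2).card) := by
  have hinj : Set.InjOn (fun p : V × V × V => ({p.1, p.2.1, p.2.2} : Finset V))
      ↑(Lv c 0 ×ˢ Lv c 1 ×ˢ Lv c 2) := by
    rintro ⟨x, y, z⟩ hp ⟨x', y', z'⟩ hq heq
    simp only [Finset.mem_coe, Finset.mem_product, mem_Lv] at hp hq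
    obtain ⟨p0, p1, p2⟩ := hp
    obtain ⟨q0, q1, q2⟩ := hq
    simp only at heq
    have hx : x = x' := by
      have hm : x ∈ ({x', y', z'} : Finset V) := heq ▸ (by simp)
      simp only [Finset.mem_insert, Finset.mem_singleton] at hm
      rcases hm with h|h|h
      · exact h
      · subst h; exact absurd p0 (by omega)
      · subst h; exact absurd p0 (by omega)
    have hy : y = y' := by
      have hm : y ∈ ({x', y', z'} : Finset V) := heq ▸ (by simp)
      simp only [Finset.mem_insert, Finset.mem_singleton] at hm
      rcases hm with h|h|h
      · subst h; exact absurd p1 (by omega)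
      · exact h
      · subst h; exact absurd p1 (by omega)
    have hz : z = z' := by
      have hm : z ∈ ({x', y', z'} : Finset V) := heq ▸ (by simp)
      simp only [Finset.mem_insert, Finset.mem_singleton] at hm
      rcases hm with h|h|h
      · subst h; exact absurd p2 (by omega)
      · subst h; exact absurd p2 (by omega)
      · exact h
    subst hx; subst hy; subst hz; rfl
  rw [Finset.card_image_of_injOn hinj, Finset.card_product, Finset.card_product]

lemma census120U :
    {s : Finset V | InducesTriad (Triad120U (TransDiagAdj c)) s} =
      ↑((((Lv c 0).powersetCard 2 ×ˢ (Lv c 1 ∪ Lv c 2)).image fun p => insert p.2 p.1) ∪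
        (((Lv c 1).powersetCard 2 ×ˢ Lv c 2).image fun p => insert p.2 p.1)) := by
  ext s
  simp only [Set.mem_setOf_eq, Finset.coe_union, Set.mem_union, Finset.mem_coe,
    Finset.mem_image, Finset.mem_product, Finset.mem_powersetCard, Finset.mem_union, mem_Lv]
  constructor
  · rintro ⟨i, j, k, hij, hik, hjk, rfl, ht⟩
    obtain ⟨x, y, z, hset, h⟩ := perm120U ht
    obtain ⟨hxy, e, l⟩ := aux_up120_val c h
    have hpair : ∀ t : Fin 3, c x = t → ({x, y} : Finset V) ⊆ Lv c t := by
      intro t ht' v hv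
      rw [mem_Lv]
      simp only [Finset.mem_insert, Finset.mem_singleton] at hv
      rcases hv with rfl|rfl <;> omega
    have hins : insert z ({x, y} : Finset V) = ({i, j, k} : Finset V) := by
      rw [hset]; ext t; simp; tauto
    have hc2 : ({x, y} : Finset V).card = 2 := Finset.card_eq_two.2 ⟨x, y, hxy, rfl⟩
    have h01 : c x = 0 ∨ c x = 1 := by omega
    rcases h01 with h0 | h1
    · exact Or.inl ⟨({x, y}, z), ⟨⟨hpair 0 h0, hc2⟩,
        show c z = 1 ∨ c z = 2 by omega⟩, hins⟩
    · exact Or.inr ⟨({x, y}, z), ⟨⟨hpair 1 h1, hc2⟩, show c z = 2 by omega⟩, hins⟩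
  · have key : ∀ (t : Fin 3) (p : Finset V) (z : V), p ⊆ Lv c t → p.card = 2 →
        ((t : ℕ) < (c z : ℕ)) → InducesTriad (Triad120U (TransDiagAdj c)) (insert z p) := by
      intro t p z hsub hcard hlz
      obtain ⟨x, y, hxy, rfl⟩ := Finset.card_eq_two.1 hcard
      have hx : c x = t := mem_Lv.1 (hsub (by simp))
      have hy : c y = t := mem_Lv.1 (hsub (by simp))
      have hxz : x ≠ z := fun h' => by subst h'; omega
      have hyz : y ≠ z := fun h' => by subst h'; omega
      refine ⟨x, y, z, hxy, hxz, hyz, ?_, Or.inl (aux_t120u c hxy (by omega) (by omega))⟩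
      ext u; simp; tauto
    rintro (⟨⟨p, z⟩, ⟨⟨hsub, hcard⟩, hz⟩, rfl⟩ | ⟨⟨p, z⟩, ⟨⟨hsub, hcard⟩, hz⟩, rfl⟩)
    · replace hz : c z = 1 ∨ c z = 2 := hz
      exact key 0 p z hsub hcard (show (0 : ℕ) < (c z : ℕ) by rcases hz with h|h <;> omega)
    · replace hz : c z = 2 := hz
      exact key 1 p z hsub hcard (show (1 : ℕ) < (c z : ℕ) by omega)

lemma count_insert_image (t : Fin 3) (D : Finset V) (hD : ∀ v ∈ D, c v ≠ t) (n : ℕ) :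
    ((((Lv c t).powersetCard n) ×ˢ D).image fun p => insert p.2 p.1).card
      = (Lv c t).card.choose n * D.card := by
  have hinj : Set.InjOn (fun p : Finset V × V => insert p.2 p.1)
      ↑((Lv c t).powersetCard n ×ˢ D) := by
    rintro ⟨p, z⟩ hp ⟨p', z'⟩ hq heq
    simp only [Finset.mem_coe, Finset.mem_product, Finset.mem_powersetCard] at hp hq
    simp only at heq
    have hz : z ∉ p := fun h => hD z hp.2 (mem_Lv.1 (hp.1.1 h))
    have hz' : z' ∉ p' := fun h => hD z' hq.2 (mem_Lv.1 (hq.1.1 h))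
    have hzz : z = z' := by
      have h1 : z ∈ insert z' p' := heq ▸ Finset.mem_insert_self z p
      rcases Finset.mem_insert.1 h1 with h|h
      · exact h
      · exact absurd (mem_Lv.1 (hq.1.1 h)) (hD z hp.2)
    subst hzz
    have hpp : p = p' := by
      have h2 := congrArg (fun s => Finset.erase s z) heq
      simpa [Finset.erase_insert hz, Finset.erase_insert hz'] using h2
    subst hpp; rfl
  rw [Finset.card_image_of_injOn hinj, Finset.card_product, Finset.card_powersetCard]

lemma exists_level_fst (t : Fin 3) (D : Finset V) {n : ℕ} (hn : n ≠ 0) :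
    ∀ s ∈ (((Lv c t).powersetCard n ×ˢ D).image fun p => insert p.2 p.1),
      ∃ v ∈ s, c v = t := by
  intro s hs
  simp only [Finset.mem_image, Finset.mem_product, Finset.mem_powersetCard] at hs
  obtain ⟨⟨p, z⟩, ⟨⟨hp, hpc⟩, -⟩, rfl⟩ := hs
  replace hpc : p.card = n := hpc
  have hpos : 0 < p.card := by omega
  obtain ⟨v, hv⟩ := Finset.card_pos.1 hpos
  exact ⟨v, Finset.mem_insert_of_mem hv, mem_Lv.1 (hp hv)⟩

lemma exists_level_snd (t tD : Fin 3) (n : ℕ) :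
    ∀ s ∈ (((Lv c t).powersetCard n ×ˢ Lv c tD).image fun p => insert p.2 p.1),
      ∃ v ∈ s, c v = tD := by
  intro s hs
  simp only [Finset.mem_image, Finset.mem_product, Finset.mem_powersetCard] at hs
  obtain ⟨⟨p, z⟩, ⟨-, hz⟩, rfl⟩ := hs
  exact ⟨z, Finset.mem_insert_self z p, mem_Lv.1 hz⟩

lemma forall_level (t tD u : Fin 3) (h1 : t ≠ u) (h2 : tD ≠ u) (n : ℕ) :
    ∀ s ∈ (((Lv c t).powersetCard n ×ˢ Lv c tD).image fun p => insert p.2 p.1),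
      ∀ v ∈ s, c v ≠ u := by
  intro s hs v hv
  simp only [Finset.mem_image, Finset.mem_product, Finset.mem_powersetCard] at hs
  obtain ⟨⟨p, z⟩, ⟨⟨hp, -⟩, hz⟩, rfl⟩ := hs
  rcases Finset.mem_insert.1 hv with rfl|h
  · intro he; exact h2 (by rw [← mem_Lv.1 hz, he])
  · intro he; exact h1 (by rw [← mem_Lv.1 (hp h), he])

lemma census120D :
    {s : Finset V | InducesTriad (Triad120D (TransDiagAdj c)) s} =
      ↑(((((Lv c 1).powersetCard 2 ×ˢ Lv c 0).image fun p => insert p.2 p.1) ∪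
         (((Lv c 2).powersetCard 2 ×ˢ Lv c 0).image fun p => insert p.2 p.1)) ∪
        (((Lv c 2).powersetCard 2 ×ˢ Lv c 1).image fun p => insert p.2 p.1)) := by
  ext s
  simp only [Set.mem_setOf_eq, Finset.coe_union, Set.mem_union, Finset.mem_coe,
    Finset.mem_image, Finset.mem_product, Finset.mem_powersetCard, mem_Lv]
  constructor
  · rintro ⟨i, j, k, hij, hik, hjk, rfl, ht⟩
    obtain ⟨x, y, z, hset, h⟩ := perm120D ht
    obtain ⟨hxy, e, l⟩ := aux_down120_val c h
    have hpair : ∀ t : Fin 3, c x = t → ({x, y} : Finset V) ⊆ Lv c t := by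
      intro t ht' v hv
      rw [mem_Lv]
      simp only [Finset.mem_insert, Finset.mem_singleton] at hv
      rcases hv with rfl|rfl <;> omega
    have hins : insert z ({x, y} : Finset V) = ({i, j, k} : Finset V) := by
      rw [hset]; ext t; simp; tauto
    have hc2 : ({x, y} : Finset V).card = 2 := Finset.card_eq_two.2 ⟨x, y, hxy, rfl⟩
    have h12 : c x = 1 ∨ c x = 2 := by omega
    rcases h12 with h1 | h2
    · exact Or.inl (Or.inl ⟨({x, y}, z), ⟨⟨hpair 1 h1, hc2⟩,
        show c z = 0 by omega⟩, hins⟩)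
    · have hz02 : c z = 0 ∨ c z = 1 := by omega
      rcases hz02 with hz | hz
      · exact Or.inl (Or.inr ⟨({x, y}, z), ⟨⟨hpair 2 h2, hc2⟩, show c z = 0 from hz⟩, hins⟩)
      · exact Or.inr ⟨({x, y}, z), ⟨⟨hpair 2 h2, hc2⟩, show c z = 1 from hz⟩, hins⟩
  · have key : ∀ (t : Fin 3) (p : Finset V) (z : V), p ⊆ Lv c t → p.card = 2 →
        ((c z : ℕ) < (t : ℕ)) → InducesTriad (Triad120D (TransDiagAdj c)) (insert z p) := by
      intro t p z hsub hcard hlz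
      obtain ⟨x, y, hxy, rfl⟩ := Finset.card_eq_two.1 hcard
      have hx : c x = t := mem_Lv.1 (hsub (by simp))
      have hy : c y = t := mem_Lv.1 (hsub (by simp))
      have hxz : x ≠ z := fun h' => by subst h'; omega
      have hyz : y ≠ z := fun h' => by subst h'; omega
      refine ⟨x, y, z, hxy, hxz, hyz, ?_, Or.inl (aux_t120d c hxy (by omega) (by omega))⟩
      ext u; simp; tauto
    rintro ((⟨⟨p, z⟩, ⟨⟨hsub, hcard⟩, hz⟩, rfl⟩ | ⟨⟨p, z⟩, ⟨⟨hsub, hcard⟩, hz⟩, rfl⟩) |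
      ⟨⟨p, z⟩, ⟨⟨hsub, hcard⟩, hz⟩, rfl⟩)
    · replace hz : c z = 0 := hz
      exact key 1 p z hsub hcard (show (c z : ℕ) < (1 : ℕ) by omega)
    · replace hz : c z = 0 := hz
      exact key 2 p z hsub hcard (show (c z : ℕ) < (2 : ℕ) by omega)
    · replace hz : c z = 1 := hz
      exact key 2 p z hsub hcard (show (c z : ℕ) < (2 : ℕ) by omega)

lemma classify_sorted {x y z : V} (hxy : x ≠ y) (hxz : x ≠ z) (hyz : y ≠ z)
    (h1 : (c x : ℕ) ≤ c y) (h2 : (c y : ℕ) ≤ c z) :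
    Triad300 (TransDiagAdj c) x y z ∨ Triad030T (TransDiagAdj c) x y z ∨
    Triad120U (TransDiagAdj c) x y z ∨ Triad120D (TransDiagAdj c) x y z := by
  rcases Nat.lt_or_ge (c x : ℕ) (c y : ℕ) with l1 | g1
  · rcases Nat.lt_or_ge (c y : ℕ) (c z : ℕ) with l2 | g2
    · exact Or.inr (Or.inl (Or.inl (aux_t030 c l1 l2)))
    · exact Or.inr (Or.inr (Or.inr (Or.inr (Or.inr (aux_t120d c hyz (by omega) (by omega))))))
  · rcases Nat.lt_or_ge (c y : ℕ) (c z : ℕ) with l2 | g2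
    · exact Or.inr (Or.inr (Or.inl (Or.inl (aux_t120u c hxy (by omega) (by omega)))))
    · exact Or.inl (aux_t300 c hxy hxz hyz (by omega) (by omega))

end TriadCensusMain

/-- Triad census of the ideal transitivity network with complete diagonal blocks. -/
theorem transDiag_triad_census {V : Type*} [Fintype V] [DecidableEq V]
    (c : V → Fin 3) (n₀ n₁ n₂ : ℕ)
    (h₀ : n₀ = (Finset.univ.filter fun v => c v = 0).card)
    (h₁ : n₁ = (Finset.univ.filter fun v => c v = 1).card)
    (h₂ : n₂ = (Finset.univ.filter fun v => c v = 2).card) :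
    {s : Finset V | InducesTriad (Triad300 (TransDiagAdj c)) s}.ncard
        = n₀.choose 3 + n₁.choose 3 + n₂.choose 3 ∧
    {s : Finset V | InducesTriad (Triad030T (TransDiagAdj c)) s}.ncard = n₀ * n₁ * n₂ ∧
    {s : Finset V | InducesTriad (Triad120U (TransDiagAdj c)) s}.ncard
        = n₀.choose 2 * (n₁ + n₂) + n₁.choose 2 * n₂ ∧
    {s : Finset V | InducesTriad (Triad120D (TransDiagAdj c)) s}.ncard
        = n₀ * (n₁.choose 2 + n₂.choose 2) + n₁ * n₂.choose 2 ∧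
    (∀ s : Finset V, s.card = 3 →
        InducesTriad (Triad300 (TransDiagAdj c)) s ∨
        InducesTriad (Triad030T (TransDiagAdj c)) s ∨
        InducesTriad (Triad120U (TransDiagAdj c)) s ∨
        InducesTriad (Triad120D (TransDiagAdj c)) s) := by
  subst h₀ h₁ h₂
  have e0 : (Lv c 0).card = (Finset.univ.filter fun v => c v = 0).card := rfl
  have e1 : (Lv c 1).card = (Finset.univ.filter fun v => c v = 1).card := rfl
  have e2 : (Lv c 2).card = (Finset.univ.filter fun v => c v = 2).card := rfl
  refine ⟨?_, ?_, ?_, ?_, ?_⟩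
  · have d01 := pows_disjoint c (t := 0) (t' := 1) (by decide) (n := 3) (by norm_num)
    have d02 := pows_disjoint c (t := 0) (t' := 2) (by decide) (n := 3) (by norm_num)
    have d12 := pows_disjoint c (t := 1) (t' := 2) (by decide) (n := 3) (by norm_num)
    have dU : Disjoint ((Lv c 0).powersetCard 3 ∪ (Lv c 1).powersetCard 3)
        ((Lv c 2).powersetCard 3) := Finset.disjoint_union_left.2 ⟨d02, d12⟩
    rw [census300 c, Set.ncard_coe_finset, Finset.card_union_of_disjoint dU,
      Finset.card_union_of_disjoint d01, Finset.card_powersetCard, Finset.card_powersetCard,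
      Finset.card_powersetCard, e0, e1, e2]
  · rw [census030 c, Set.ncard_coe_finset, count030 c, e0, e1, e2]
    ring
  · have hD : ∀ v ∈ Lv c 1 ∪ Lv c 2, c v ≠ (0 : Fin 3) := by
      intro v hv
      rcases Finset.mem_union.1 hv with h|h
      · have := mem_Lv.1 h; omega
      · have := mem_Lv.1 h; omega
    have hD' : ∀ v ∈ Lv c 2, c v ≠ (1 : Fin 3) := by
      intro v hv; have := mem_Lv.1 hv; omega
    have hdisj : Disjoint
        (((Lv c 0).powersetCard 2 ×ˢ (Lv c 1 ∪ Lv c 2)).image fun p => insert p.2 p.1)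
        (((Lv c 1).powersetCard 2 ×ˢ Lv c 2).image fun p => insert p.2 p.1) := by
      rw [Finset.disjoint_left]
      intro s hs1 hs2
      obtain ⟨v, hv, hv0⟩ := exists_level_fst c 0 (Lv c 1 ∪ Lv c 2) (by norm_num) s hs1
      exact forall_level c 1 2 0 (by decide) (by decide) 2 s hs2 v hv hv0
    rw [census120U c, Set.ncard_coe_finset, Finset.card_union_of_disjoint hdisj,
      count_insert_image c 0 (Lv c 1 ∪ Lv c 2) hD 2, count_insert_image c 1 (Lv c 2) hD' 2,
      Finset.card_union_of_disjoint (lv_disjoint c (by decide)), e0, e1, e2]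
  · have hD10 : ∀ v ∈ Lv c 0, c v ≠ (1 : Fin 3) := by
      intro v hv; have := mem_Lv.1 hv; omega
    have hD20 : ∀ v ∈ Lv c 0, c v ≠ (2 : Fin 3) := by
      intro v hv; have := mem_Lv.1 hv; omega
    have hD21 : ∀ v ∈ Lv c 1, c v ≠ (2 : Fin 3) := by
      intro v hv; have := mem_Lv.1 hv; omega
    have d12' : Disjoint
        (((Lv c 1).powersetCard 2 ×ˢ Lv c 0).image fun p => insert p.2 p.1)
        (((Lv c 2).powersetCard 2 ×ˢ Lv c 0).image fun p => insert p.2 p.1) := by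
      rw [Finset.disjoint_left]
      intro s hs1 hs2
      obtain ⟨v, hv, hv1⟩ := exists_level_fst c 1 (Lv c 0) (by norm_num) s hs1
      exact forall_level c 2 0 1 (by decide) (by decide) 2 s hs2 v hv hv1
    have d13 : Disjoint
        (((Lv c 1).powersetCard 2 ×ˢ Lv c 0).image fun p => insert p.2 p.1)
        (((Lv c 2).powersetCard 2 ×ˢ Lv c 1).image fun p => insert p.2 p.1) := by
      rw [Finset.disjoint_left]
      intro s hs1 hs2
      obtain ⟨v, hv, hv0⟩ := exists_level_snd c 1 0 2 s hs1
      exact forall_level c 2 1 0 (by decide) (by decide) 2 s hs2 v hv hv0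
    have d23 : Disjoint
        (((Lv c 2).powersetCard 2 ×ˢ Lv c 0).image fun p => insert p.2 p.1)
        (((Lv c 2).powersetCard 2 ×ˢ Lv c 1).image fun p => insert p.2 p.1) := by
      rw [Finset.disjoint_left]
      intro s hs1 hs2
      obtain ⟨v, hv, hv0⟩ := exists_level_snd c 2 0 2 s hs1
      exact forall_level c 2 1 0 (by decide) (by decide) 2 s hs2 v hv hv0
    have dU : Disjoint
        ((((Lv c 1).powersetCard 2 ×ˢ Lv c 0).image fun p => insert p.2 p.1) ∪
          (((Lv c 2).powersetCard 2 ×ˢ Lv c 0).image fun p => insert p.2 p.1))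
        (((Lv c 2).powersetCard 2 ×ˢ Lv c 1).image fun p => insert p.2 p.1) :=
      Finset.disjoint_union_left.2 ⟨d13, d23⟩
    rw [census120D c, Set.ncard_coe_finset, Finset.card_union_of_disjoint dU,
      Finset.card_union_of_disjoint d12', count_insert_image c 1 (Lv c 0) hD10 2,
      count_insert_image c 2 (Lv c 0) hD20 2, count_insert_image c 2 (Lv c 1) hD21 2,
      e0, e1, e2]
    ring
  · intro s hs
    obtain ⟨a, b, d, hab, had, hbd, rfl⟩ := Finset.card_eq_three.1 hs
    have wrap : ∀ x y z : V, x ≠ y → x ≠ z → y ≠ z → ({a, b, d} : Finset V) = {x, y, z} →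
        (c x : ℕ) ≤ c y → (c y : ℕ) ≤ c z →
        (InducesTriad (Triad300 (TransDiagAdj c)) {a, b, d} ∨
         InducesTriad (Triad030T (TransDiagAdj c)) {a, b, d} ∨
         InducesTriad (Triad120U (TransDiagAdj c)) {a, b, d} ∨
         InducesTriad (Triad120D (TransDiagAdj c)) {a, b, d}) := by
      intro x y z hxy hxz hyz hset h1 h2
      rcases classify_sorted c hxy hxz hyz h1 h2 with h|h|h|h
      · exact Or.inl ⟨x, y, z, hxy, hxz, hyz, hset, h⟩
      · exact Or.inr (Or.inl ⟨x, y, z, hxy, hxz, hyz, hset, h⟩)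
      · exact Or.inr (Or.inr (Or.inl ⟨x, y, z, hxy, hxz, hyz, hset, h⟩))
      · exact Or.inr (Or.inr (Or.inr ⟨x, y, z, hxy, hxz, hyz, hset, h⟩))
    rcases Nat.le_total (c a : ℕ) (c b : ℕ) with h1|h1 <;>
      rcases Nat.le_total (c b : ℕ) (c d : ℕ) with h2|h2 <;>
      rcases Nat.le_total (c a : ℕ) (c d : ℕ) with h3|h3
    · exact wrap a b d hab had hbd rfl h1 h2
    · exact wrap a b d hab had hbd rfl h1 h2
    · exact wrap a d b had hab hbd.symm (by ext u; simp; tauto) h3 (by omega)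
    · exact wrap d a b had.symm hbd.symm hab (by ext u; simp; tauto) h3 h1
    · exact wrap b a d hab.symm hbd had (by ext u; simp; tauto) h1 h3
    · exact wrap b d a hbd hab.symm had.symm (by ext u; simp; tauto) h2 h3
    · exact wrap d b a hbd.symm had.symm hab.symm (by ext u; simp; tauto) h2 h1
    · exact wrap d b a hbd.symm had.symm hab.symm (by ext u; simp; tauto) h2 h1
end

section
/- If every two vertices lying in the same cluster of a partition are structurally equivalent, then every block of the partition is complete or null: for any clusters X and Y (possibly equal), either Adj x y holds for all x ∈ X and y ∈ Y with x ≠ y, or Adj x y fails for all such pairs. -/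
/-- Vertices `i` and `j` are structurally equivalent in the directed graph with adjacency
relation `A`. -/
def StructurallyEquivalent {V : Type*} (A : V → V → Prop) (i j : V) : Prop :=
  (A i j ↔ A j i) ∧ ∀ k, k ≠ i → k ≠ j → ((A i k ↔ A j k) ∧ (A k i ↔ A k j))

private lemma step1 {V : Type*} {ι : Type*} {A : V → V → Prop} {f : V → ι}
    (h : ∀ i j : V, f i = f j → StructurallyEquivalent A i j)
    {p q p' : V} (hA : A p q) (hpq : p ≠ q) (hf : f p = f p') (hq : p' ≠ q) : A p' q := by
  by_cases hpp : p' = p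
  · rwa [hpp]
  · exact (((h p p' hf).2 q (Ne.symm hpq) (Ne.symm hq)).1).mp hA

private lemma step2 {V : Type*} {ι : Type*} {A : V → V → Prop} {f : V → ι}
    (h : ∀ i j : V, f i = f j → StructurallyEquivalent A i j)
    {p q q' : V} (hA : A p q) (hpq : p ≠ q) (hf : f q = f q') (hq : p ≠ q') : A p q' := by
  by_cases hqq : q' = q
  · rwa [hqq]
  · exact (((h q q' hf).2 p hpq hq).2).mp hA

/-- If every two vertices lying in the same cluster of a partition (given by the cluster
assignment `f`) are structurally equivalent, then every block of the partition is
complete or null. -/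
theorem blocks_complete_or_null {V : Type*} [Fintype V] {ι : Type*}
    (A : V → V → Prop) (hloop : ∀ i, ¬ A i i) (f : V → ι)
    (h : ∀ i j : V, f i = f j → StructurallyEquivalent A i j) :
    ∀ x y : ι,
      (∀ p q : V, f p = x → f q = y → p ≠ q → A p q) ∨
      (∀ p q : V, f p = x → f q = y → p ≠ q → ¬ A p q) := by
  intro x y
  by_cases hex : ∃ p q : V, f p = x ∧ f q = y ∧ p ≠ q ∧ A p q
  · left
    obtain ⟨p, q, hpx, hqy, hpq, hA⟩ := hex
    intro p' q' hp' hq' hne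
    have hfp : f p = f p' := by rw [hpx, hp']
    have hfq : f q = f q' := by rw [hqy, hq']
    by_cases hp'q : p' = q
    · -- then f p = f q, all in same cluster
      have hfpq : f p = f q := by rw [hfp, hp'q]
      have hqp : A q p := ((h p q hfpq).1).mp hA
      have : A q q' := step2 h hqp (Ne.symm hpq) (hfpq ▸ hfq) (hp'q ▸ hne)
      rwa [hp'q]
    · have h1 : A p' q := step1 h hA hpq hfp hp'q
      exact step2 h h1 hp'q hfq hne
  · right
    intro p q hpx hqy hpq hA
    exact hex ⟨p, q, hpx, hqy, hpq, hA⟩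
end
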